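/- The family L₂ belongs to the class 1N; that is, there exists a polynomial-size family of 1nfa's over {0,1,#} that solves L₂. -/

import Mathlib

/-! ## One-way nondeterministic finite automata -/

structure OneNFA (α : Type) : Type 1 where
  Q : Type
  [finQ : Fintype Q]
  start : Q
  next : Q → α → Set Q
  next_nonempty : ∀ q a, (next q a).Nonempty
  acc : Set Q

attribute [instance] OneNFA.finQ

namespace OneNFA

variable {α : Type}

/-- The state complexity (number of inner states). -/
def sc (M : OneNFA α) : ℕ := Fintype.card M.Q

/-- `p` is a computation path of `M` on input `x`. -/
def IsPath (M : OneNFA α) (x : List α) (p : Fin (x.length + 1) → M.Q) : Prop :=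
  p 0 = M.start ∧ ∀ i : Fin x.length, p i.succ ∈ M.next (p i.castSucc) (x.get i)

/-- `p` is an accepting computation path of `M` on input `x`. -/
def IsAccPath (M : OneNFA α) (x : List α) (p : Fin (x.length + 1) → M.Q) : Prop :=
  M.IsPath x p ∧ p (Fin.last x.length) ∈ M.acc

def Accepts (M : OneNFA α) (x : List α) : Prop := ∃ p, M.IsAccPath x p

/-- `M` is a 1dfa: every transition set is a singleton. -/
def Deterministic (M : OneNFA α) : Prop := ∀ q a, ∃ q', M.next q a = {q'}

end OneNFA

/-! ## Families of promise problems -/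

structure PromiseFamily (α : Type) where
  pos : ℕ → Set (List α)
  neg : ℕ → Set (List α)
  disj : ∀ n, Disjoint (pos n) (neg n)

namespace PromiseFamily

def valid {α : Type} (L : PromiseFamily α) (n : ℕ) : Set (List α) := L.pos n ∪ L.neg n

def co {α : Type} (L : PromiseFamily α) : PromiseFamily α :=
  ⟨L.neg, L.pos, fun n => (L.disj n).symm⟩

end PromiseFamily

/-- A family of promise problems over some finite alphabet. -/
structure Family : Type 1 where
  alph : Type
  [finA : Fintype alph]
  prob : PromiseFamily alph

attribute [instance] Family.finA

def Family.co (F : Family) : Family := { alph := F.alph, prob := F.prob.co }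

/-! ## One-way machine families -/

def Solves1 {α : Type} (M : ℕ → OneNFA α) (L : PromiseFamily α) : Prop :=
  ∀ n, (∀ x ∈ L.pos n, (M n).Accepts x) ∧ (∀ x ∈ L.neg n, ¬ (M n).Accepts x)

def PolySize1 {α : Type} (M : ℕ → OneNFA α) : Prop :=
  ∃ p : Polynomial ℕ, ∀ n, (M n).sc ≤ p.eval n

def Unambiguous1 {α : Type} (M : ℕ → OneNFA α) (L : PromiseFamily α) : Prop :=
  ∀ n, ∀ x ∈ L.valid n, {p | (M n).IsAccPath x p}.Subsingleton

def AcceptFew1 {α : Type} (M : ℕ → OneNFA α) (L : PromiseFamily α) : Prop :=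
  ∃ P : MvPolynomial (Fin 2) ℕ, ∀ n, ∀ x ∈ L.valid n,
    {p | (M n).IsAccPath x p}.ncard ≤ MvPolynomial.eval ![n, x.length] P

def WeaklyUnambiguous1 {α : Type} (M : ℕ → OneNFA α) (L : PromiseFamily α) : Prop :=
  ∀ n, ∀ x ∈ L.valid n, ∀ q : (M n).Q,
    {p | (M n).IsAccPath x p ∧ p (Fin.last x.length) = q}.Subsingleton

def ReachUnambiguous1 {α : Type} (M : ℕ → OneNFA α) (L : PromiseFamily α) : Prop :=
  ∀ n, ∀ x ∈ L.valid n, ∀ i ≤ x.length, ∀ q : (M n).Q,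
    {p : Fin ((x.take i).length + 1) → (M n).Q |
      (M n).IsPath (x.take i) p ∧ p (Fin.last (x.take i).length) = q}.Subsingleton

def ReachFew1 {α : Type} (M : ℕ → OneNFA α) (L : PromiseFamily α) : Prop :=
  ∃ P : MvPolynomial (Fin 2) ℕ, ∀ n, ∀ x ∈ L.valid n, ∀ i ≤ x.length, ∀ q : (M n).Q,
    {p : Fin ((x.take i).length + 1) → (M n).Q |
      (M n).IsPath (x.take i) p ∧ p (Fin.last (x.take i).length) = q}.ncard ≤
      MvPolynomial.eval ![n, x.length] P

/-! ## One-way nonuniform state complexity classes -/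

def oneN : Set Family :=
  {F | ∃ M : ℕ → OneNFA F.alph, PolySize1 M ∧ Solves1 M F.prob}

def oneD : Set Family :=
  {F | ∃ M : ℕ → OneNFA F.alph, PolySize1 M ∧ (∀ n, (M n).Deterministic) ∧ Solves1 M F.prob}

def oneU : Set Family :=
  {F | ∃ M : ℕ → OneNFA F.alph, PolySize1 M ∧ Unambiguous1 M F.prob ∧ Solves1 M F.prob}

def oneFew : Set Family :=
  {F | ∃ M : ℕ → OneNFA F.alph, PolySize1 M ∧ AcceptFew1 M F.prob ∧ Solves1 M F.prob}

def oneFewU : Set Family :=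
  {F | ∃ M : ℕ → OneNFA F.alph, PolySize1 M ∧ AcceptFew1 M F.prob ∧
        WeaklyUnambiguous1 M F.prob ∧ Solves1 M F.prob}

def oneReachU : Set Family :=
  {F | ∃ M : ℕ → OneNFA F.alph, PolySize1 M ∧ AcceptFew1 M F.prob ∧
        ReachUnambiguous1 M F.prob ∧ Solves1 M F.prob}

def oneReachFew : Set Family :=
  {F | ∃ M : ℕ → OneNFA F.alph, PolySize1 M ∧ AcceptFew1 M F.prob ∧
        ReachFew1 M F.prob ∧ Solves1 M F.prob}

def oneReachFewU : Set Family :=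
  {F | ∃ M : ℕ → OneNFA F.alph, PolySize1 M ∧ AcceptFew1 M F.prob ∧
        ReachFew1 M F.prob ∧ WeaklyUnambiguous1 M F.prob ∧ Solves1 M F.prob}

/-- The complement class `co-C`. -/
def coC (C : Set Family) : Set Family := {F | F.co ∈ C}
/-! ## Two-way nondeterministic finite automata -/

/-- A tape symbol: either an input symbol, the left endmarker `Sum.inr false`,
or the right endmarker `Sum.inr true`. -/
def TapeSym (α : Type) : Type := α ⊕ Bool

/-- The symbol held in cell `i` of the tape containing `▷x◁`. -/
def tapeAt {α : Type} (x : List α) (i : ℕ) : TapeSym α :=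
  if h0 : i = 0 then Sum.inr false
  else if h : i ≤ x.length then Sum.inl (x.get ⟨i - 1, by omega⟩)
  else Sum.inr true

structure TwoNFA (α : Type) : Type 1 where
  Q : Type
  [finQ : Fintype Q]
  start : Q
  acc : Set Q
  rej : Set Q
  acc_rej_disj : Disjoint acc rej
  next : Q → TapeSym α → Set (Q × ℤ)
  next_dir : ∀ q a t, t ∈ next q a → t.2 = -1 ∨ t.2 = 0 ∨ t.2 = 1

attribute [instance] TwoNFA.finQ

namespace TwoNFA

variable {α : Type}

def sc (M : TwoNFA α) : ℕ := Fintype.card M.Q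

def Halting (M : TwoNFA α) (q : M.Q) : Prop := q ∈ M.acc ∨ q ∈ M.rej

/-- Configuration `c` yields configuration `c'` in one step on input `x`. -/
def Yields (M : TwoNFA α) (x : List α) (c c' : M.Q × ℕ) : Prop :=
  ¬ M.Halting c.1 ∧ c.2 ≤ x.length + 1 ∧ c'.2 ≤ x.length + 1 ∧
    ∃ d : ℤ, (c'.1, d) ∈ M.next c.1 (tapeAt x c.2) ∧ (c'.2 : ℤ) = (c.2 : ℤ) + d

/-- A partial computation path of length `k` of `M` on `x`. -/
def IsPartialPath (M : TwoNFA α) (x : List α) (k : ℕ) (p : Fin (k + 1) → M.Q × ℕ) : Prop :=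
  p 0 = (M.start, 0) ∧ ∀ i : Fin k, M.Yields x (p i.castSucc) (p i.succ)

/-- A (full) computation path: the final configuration is the only halting one. -/
def IsCompPath (M : TwoNFA α) (x : List α) (k : ℕ) (p : Fin (k + 1) → M.Q × ℕ) : Prop :=
  M.IsPartialPath x k p ∧ ∀ i : Fin (k + 1), (M.Halting (p i).1 ↔ i = Fin.last k)

def IsAccPath (M : TwoNFA α) (x : List α) (k : ℕ) (p : Fin (k + 1) → M.Q × ℕ) : Prop :=
  M.IsCompPath x k p ∧ (p (Fin.last k)).1 ∈ M.acc

def Accepts (M : TwoNFA α) (x : List α) : Prop := ∃ k p, M.IsAccPath x k p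

def Deterministic (M : TwoNFA α) : Prop := ∀ q a, ∃ t, M.next q a = {t}

/-- The set of accepting computation paths of `M` on `x`. -/
def accPaths (M : TwoNFA α) (x : List α) : Set ((k : ℕ) × (Fin (k + 1) → M.Q × ℕ)) :=
  {kp | M.IsAccPath x kp.1 kp.2}

/-- The set of computation paths of `M` on `x` ending at configuration `conf`. -/
def compPathsTo (M : TwoNFA α) (x : List α) (conf : M.Q × ℕ) :
    Set ((k : ℕ) × (Fin (k + 1) → M.Q × ℕ)) :=
  {kp | M.IsCompPath x kp.1 kp.2 ∧ kp.2 (Fin.last kp.1) = conf}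

/-- The set of partial computation paths of `M` on `x` ending at configuration `conf`. -/
def partialPathsTo (M : TwoNFA α) (x : List α) (conf : M.Q × ℕ) :
    Set ((k : ℕ) × (Fin (k + 1) → M.Q × ℕ)) :=
  {kp | M.IsPartialPath x kp.1 kp.2 ∧ kp.2 (Fin.last kp.1) = conf}

end TwoNFA

/-! ## Two-way machine families -/

def Solves2 {α : Type} (M : ℕ → TwoNFA α) (L : PromiseFamily α) : Prop :=
  ∀ n, (∀ x ∈ L.pos n, (M n).Accepts x) ∧ (∀ x ∈ L.neg n, ¬ (M n).Accepts x)

def PolySize2 {α : Type} (M : ℕ → TwoNFA α) : Prop :=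
  ∃ p : Polynomial ℕ, ∀ n, (M n).sc ≤ p.eval n

def Unambiguous2 {α : Type} (M : ℕ → TwoNFA α) (L : PromiseFamily α) : Prop :=
  ∀ n, ∀ x ∈ L.valid n, ((M n).accPaths x).Subsingleton

def AcceptFew2 {α : Type} (M : ℕ → TwoNFA α) (L : PromiseFamily α) : Prop :=
  ∃ P : MvPolynomial (Fin 2) ℕ, ∀ n, ∀ x ∈ L.valid n,
    ((M n).accPaths x).encard ≤ (MvPolynomial.eval ![n, x.length] P : ℕ∞)

def WeaklyUnambiguous2 {α : Type} (M : ℕ → TwoNFA α) (L : PromiseFamily α) : Prop :=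
  ∀ n, ∀ x ∈ L.valid n, ∀ conf : (M n).Q × ℕ, conf.1 ∈ (M n).acc →
    ((M n).compPathsTo x conf).Subsingleton

def ReachUnambiguous2 {α : Type} (M : ℕ → TwoNFA α) (L : PromiseFamily α) : Prop :=
  ∀ n, ∀ x ∈ L.valid n, ∀ conf : (M n).Q × ℕ,
    ((M n).partialPathsTo x conf).Subsingleton

def ReachFew2 {α : Type} (M : ℕ → TwoNFA α) (L : PromiseFamily α) : Prop :=
  ∃ P : MvPolynomial (Fin 2) ℕ, ∀ n, ∀ x ∈ L.valid n, ∀ conf : (M n).Q × ℕ,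
    ((M n).partialPathsTo x conf).encard ≤ (MvPolynomial.eval ![n, x.length] P : ℕ∞)

/-! ## Two-way nonuniform state complexity classes -/

def twoN : Set Family :=
  {F | ∃ M : ℕ → TwoNFA F.alph, PolySize2 M ∧ Solves2 M F.prob}

def twoD : Set Family :=
  {F | ∃ M : ℕ → TwoNFA F.alph, PolySize2 M ∧ (∀ n, (M n).Deterministic) ∧ Solves2 M F.prob}

def twoU : Set Family :=
  {F | ∃ M : ℕ → TwoNFA F.alph, PolySize2 M ∧ Unambiguous2 M F.prob ∧ Solves2 M F.prob}

def twoFew : Set Family :=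
  {F | ∃ M : ℕ → TwoNFA F.alph, PolySize2 M ∧ AcceptFew2 M F.prob ∧ Solves2 M F.prob}

def twoFewU : Set Family :=
  {F | ∃ M : ℕ → TwoNFA F.alph, PolySize2 M ∧ AcceptFew2 M F.prob ∧
        WeaklyUnambiguous2 M F.prob ∧ Solves2 M F.prob}

def twoReachU : Set Family :=
  {F | ∃ M : ℕ → TwoNFA F.alph, PolySize2 M ∧ AcceptFew2 M F.prob ∧
        ReachUnambiguous2 M F.prob ∧ Solves2 M F.prob}

def twoReachFew : Set Family :=
  {F | ∃ M : ℕ → TwoNFA F.alph, PolySize2 M ∧ AcceptFew2 M F.prob ∧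
        ReachFew2 M F.prob ∧ Solves2 M F.prob}

def twoReachFewU : Set Family :=
  {F | ∃ M : ℕ → TwoNFA F.alph, PolySize2 M ∧ AcceptFew2 M F.prob ∧
        ReachFew2 M F.prob ∧ WeaklyUnambiguous2 M F.prob ∧ Solves2 M F.prob}

/-! ## Ceilings -/

/-- The family `F` has an `f(n)`-ceiling. -/
def HasCeiling (F : Family) (f : ℕ → ℕ) : Prop :=
  ∀ n, ∀ x ∈ F.prob.valid n, x.length ≤ f n

/-- The restriction `C/F` of a class `C` to families having an `f`-ceiling for some `f ∈ S`. -/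
def ceil (C : Set Family) (S : Set (ℕ → ℕ)) : Set Family :=
  {F | F ∈ C ∧ ∃ f ∈ S, HasCeiling F f}

def polyFuns : Set (ℕ → ℕ) := {f | ∃ p : Polynomial ℕ, ∀ n, f n = p.eval n}

/-- Super-exponential functions: `f(n) > 2^{p(n)}` for all but finitely many `n`,
for every polynomial `p`. -/
def supexpFuns : Set (ℕ → ℕ) :=
  {f | ∀ p : Polynomial ℕ, ∃ N, ∀ n ≥ N, 2 ^ p.eval n < f n}

/-- `F` has a logarithmic ceiling `ℓ(n) = a·log₂ n + b` with constants `a, b ≥ 0`. -/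
def HasLogCeiling (F : Family) : Prop :=
  ∃ a b : ℝ, 0 ≤ a ∧ 0 ≤ b ∧
    ∀ n, ∀ x ∈ F.prob.valid n, (x.length : ℝ) ≤ a * Real.logb 2 n + b

/-- The restriction `C/log` of a class `C` to families having logarithmic ceilings. -/
def ceilLog (C : Set Family) : Set Family := {F | F ∈ C ∧ HasLogCeiling F}
/-! ## The alphabet `{0, 1, #}` and encodings -/

inductive Sym3 : Type
  | zero | one | hash
deriving DecidableEq

instance : Fintype Sym3 :=
  ⟨{Sym3.zero, Sym3.one, Sym3.hash}, by intro x; cases x <;> simp⟩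

/-- The block `1^i 0^{m-i}`. -/
def block (m i : ℕ) : List Sym3 :=
  List.replicate i Sym3.one ++ List.replicate (m - i) Sym3.zero

lemma block_length {m i : ℕ} (h : i ≤ m) : (block m i).length = m := by
  simp [block]; omega

lemma block_count {m : ℕ} (i : ℕ) : (block m i).count Sym3.one = i := by
  simp [block, List.count_append, List.count_replicate]

lemma block_inj {m i j : ℕ} (h : block m i = block m j) : i = j := by
  have := block_count (m := m) i
  rw [h, block_count] at this
  omega

/-- The encoding `[[i₁,…,i_k]]_m` of a list of numbers. -/
def enc (m : ℕ) : List ℕ → List Sym3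
  | [] => []
  | [i] => block m i
  | i :: j :: rest => block m i ++ Sym3.zero :: enc m (j :: rest)

/-- Lists of length `k` with entries in `[n]`. -/
def ValidList (n k : ℕ) (l : List ℕ) : Prop :=
  l.length = k ∧ ∀ i ∈ l, 1 ≤ i ∧ i ≤ n

lemma enc_length {m : ℕ} :
    ∀ l : List ℕ, (∀ i ∈ l, i ≤ m) → (enc m l).length = l.length * (m + 1) - 1
  | [] => by simp [enc]
  | [i] => by
      intro h
      simp [enc, block_length (h i (by simp))]
  | i :: j :: rest => by
      intro h
      have ih := enc_length (j :: rest) (fun a ha => h a (List.mem_cons_of_mem _ ha))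
      have hb : (block m i).length = m := block_length (h i (List.mem_cons_self))
      show (block m i ++ Sym3.zero :: enc m (j :: rest)).length = _
      rw [List.length_append, hb, List.length_cons, ih]
      have hc : (i :: j :: rest).length = (j :: rest).length + 1 := by simp
      rw [hc]
      set L := (j :: rest).length with hLdef
      have hL : 1 ≤ L := by simp [hLdef]
      have h1 : (L + 1) * (m + 1) = L * (m + 1) + (m + 1) := by ring
      rw [h1]
      set P := L * (m + 1) with hPdef
      have hP : 1 ≤ P := by
        have := Nat.mul_le_mul hL (Nat.le_add_left 1 m)
        simpa [hPdef] using this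
      omega

lemma enc_ne_nil {m : ℕ} (i : ℕ) (rest : List ℕ) (hi : 1 ≤ i) :
    enc m (i :: rest) ≠ [] := by
  cases rest with
  | nil =>
      simp only [enc, block]
      intro h
      have := congrArg List.length h
      simp at this
      omega
  | cons j rest' =>
      simp only [enc]
      intro h
      have := congrArg List.length h
      simp at this

lemma enc_inj {m : ℕ} :
    ∀ u w : List ℕ, (∀ i ∈ u, 1 ≤ i ∧ i ≤ m) → (∀ i ∈ w, 1 ≤ i ∧ i ≤ m) →
      enc m u = enc m w → u = w
  | [], [], _, _, _ => rfl
  | [], j :: w', _, hw, h => by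
      exact absurd h.symm (enc_ne_nil j w' (hw j (by simp)).1)
  | i :: u', [], hu, _, h => by
      exact absurd h (enc_ne_nil i u' (hu i (by simp)).1)
  | [i], [j], hu, hw, h => by
      simp only [enc] at h
      rw [block_inj h]
  | [i], j :: b :: w', hu, hw, h => by
      exfalso
      have hl := congrArg List.length h
      rw [show enc m [i] = block m i from rfl,
        show enc m (j :: b :: w') = block m j ++ Sym3.zero :: enc m (b :: w') from rfl] at hl
      rw [List.length_append, List.length_cons,
        block_length (hu i (by simp)).2, block_length (hw j (by simp)).2] at hl
      omega
  | i :: a :: u', [j], hu, hw, h => by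
      exfalso
      have hl := congrArg List.length h
      rw [show enc m [j] = block m j from rfl,
        show enc m (i :: a :: u') = block m i ++ Sym3.zero :: enc m (a :: u') from rfl] at hl
      rw [List.length_append, List.length_cons,
        block_length (hu i (by simp)).2, block_length (hw j (by simp)).2] at hl
      omega
  | i :: a :: u', j :: b :: w', hu, hw, h => by
      rw [show enc m (i :: a :: u') = block m i ++ Sym3.zero :: enc m (a :: u') from rfl,
        show enc m (j :: b :: w') = block m j ++ Sym3.zero :: enc m (b :: w') from rfl] at h
      have hlen : (block m i).length = (block m j).length := by
        rw [block_length (hu i (by simp)).2, block_length (hw j (by simp)).2]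
      obtain ⟨h1, h2⟩ := List.append_inj h hlen
      have h3 : enc m (a :: u') = enc m (b :: w') := by
        simpa using h2
      have ih := enc_inj (a :: u') (b :: w')
        (fun x hx => hu x (List.mem_cons_of_mem _ hx))
        (fun x hx => hw x (List.mem_cons_of_mem _ hx)) h3
      rw [block_inj h1, ih]
/-! ## The promise problem family `L₁` -/

def L1pos (n : ℕ) : Set (List Sym3) :=
  {x | ∃ u v : List ℕ, ValidList n n u ∧ ValidList n n v ∧ u ≠ v ∧
        x = enc n u ++ Sym3.hash :: enc n v}

def L1neg (n : ℕ) : Set (List Sym3) :=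
  {x | ∃ u v : List ℕ, ValidList n n u ∧ ValidList n n v ∧ u = v ∧
        x = enc n u ++ Sym3.hash :: enc n v}

lemma L1_disj (n : ℕ) : Disjoint (L1pos n) (L1neg n) := by
  rw [Set.disjoint_left]
  rintro x ⟨u, v, hu, hv, huv, rfl⟩ ⟨u', v', hu', hv', huv', heq⟩
  have hlen : (enc n u).length = (enc n u').length := by
    rw [enc_length u (fun i hi => (hu.2 i hi).2),
      enc_length u' (fun i hi => (hu'.2 i hi).2), hu.1, hu'.1]
  obtain ⟨h1, h2⟩ := List.append_inj heq hlen
  have h2' : enc n v = enc n v' := by simpa using h2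
  have e1 : u = u' := enc_inj u u' hu.2 hu'.2 h1
  have e2 : v = v' := enc_inj v v' hv.2 hv'.2 h2'
  exact huv (by rw [e1, e2, huv'])

def L1prob : PromiseFamily Sym3 := ⟨L1pos, L1neg, L1_disj⟩

def L1fam : Family := { alph := Sym3, prob := L1prob }

/-! ## Matrices, their encodings, and the promise problem family `L₂` -/

/-- `R` represents an `n × n` matrix with entries in `[n]`, given as its list of rows. -/
def ValidMat (n : ℕ) (R : List (List ℕ)) : Prop :=
  R.length = n ∧ ∀ r ∈ R, ValidList n n r

/-- The encoding `[[D]]_n` of a matrix: its encoded rows joined by `#`. -/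
def encMat (n : ℕ) : List (List ℕ) → List Sym3
  | [] => []
  | [r] => enc n r
  | r :: s :: rest => enc n r ++ Sym3.hash :: encMat n (s :: rest)

lemma encMat_len {n : ℕ} :
    ∀ R : List (List ℕ), (∀ r ∈ R, ValidList n n r) →
      (encMat n R).length = R.length * (n * (n + 1) - 1 + 1) - 1
  | [] => by simp [encMat]
  | [r] => by
      intro h
      have hr := h r (by simp)
      have he : (enc n r).length = n * (n + 1) - 1 := by
        rw [enc_length r (fun i hi => (hr.2 i hi).2), hr.1]
      show (enc n r).length = ([r] : List (List ℕ)).length * (n * (n + 1) - 1 + 1) - 1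
      rw [he, show ([r] : List (List ℕ)).length = 1 from rfl]
      omega
  | r :: s :: rest => by
      intro h
      have ih := encMat_len (s :: rest) (fun a ha => h a (List.mem_cons_of_mem _ ha))
      have hr := h r (by simp)
      have he : (enc n r).length = n * (n + 1) - 1 := by
        rw [enc_length r (fun i hi => (hr.2 i hi).2), hr.1]
      show (enc n r ++ Sym3.hash :: encMat n (s :: rest)).length = _
      rw [List.length_append, he, List.length_cons, ih]
      have hc : (r :: s :: rest).length = (s :: rest).length + 1 := by simp
      rw [hc]
      set e := n * (n + 1) - 1 with hedef
      set L := (s :: rest).length with hLdef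
      have hL : 1 ≤ L := by simp [hLdef]
      have h1 : (L + 1) * (e + 1) = L * (e + 1) + (e + 1) := by ring
      rw [h1]
      set P := L * (e + 1) with hPdef
      have hP : 1 ≤ P := by
        calc 1 = 1 * 1 := by ring
        _ ≤ L * (e + 1) := Nat.mul_le_mul hL (by omega)
      omega

lemma encMat_inj {n : ℕ} :
    ∀ R W : List (List ℕ), (∀ r ∈ R, ValidList n n r) → (∀ r ∈ W, ValidList n n r) →
      R.length = W.length → encMat n R = encMat n W → R = W
  | [], [], _, _, _, _ => rfl
  | [], _ :: _, _, _, hl, _ => by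
      simp only [List.length_cons, List.length_nil] at hl
      omega
  | _ :: _, [], _, _, hl, _ => by
      simp only [List.length_cons, List.length_nil] at hl
      omega
  | [r], [w], hR, hW, _, h => by
      have := enc_inj r w (hR r (by simp)).2 (hW w (by simp)).2 h
      rw [this]
  | [r], w :: w' :: W', _, _, hl, _ => by
      simp only [List.length_cons, List.length_nil] at hl
      omega
  | r :: r' :: R', [w], _, _, hl, _ => by
      simp only [List.length_cons, List.length_nil] at hl
      omega
  | r :: r' :: R', w :: w' :: W', hR, hW, hl, h => by
      rw [show encMat n (r :: r' :: R') = enc n r ++ Sym3.hash :: encMat n (r' :: R') from rfl,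
        show encMat n (w :: w' :: W') = enc n w ++ Sym3.hash :: encMat n (w' :: W') from rfl] at h
      have hrlen : (enc n r).length = (enc n w).length := by
        have h1 := hR r (by simp); have h2 := hW w (by simp)
        rw [enc_length r (fun i hi => (h1.2 i hi).2),
          enc_length w (fun i hi => (h2.2 i hi).2), h1.1, h2.1]
      obtain ⟨h1, h2⟩ := List.append_inj h hrlen
      have h3 : encMat n (r' :: R') = encMat n (w' :: W') := by simpa using h2
      have ihr := enc_inj r w (hR r (by simp)).2 (hW w (by simp)).2 h1
      have ih := encMat_inj (r' :: R') (w' :: W')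
        (fun a ha => hR a (List.mem_cons_of_mem _ ha))
        (fun a ha => hW a (List.mem_cons_of_mem _ ha))
        (by simpa using hl) h3
      rw [ihr, ih]

/-- `SelSum R s` holds iff `s` is obtained by choosing one entry from each row of `R`
(the value `sum_D(σ)` for some choice function `σ`). -/
inductive SelSum : List (List ℕ) → ℕ → Prop
  | nil : SelSum [] 0
  | cons {a : ℕ} {r : List ℕ} {rest : List (List ℕ)} {s : ℕ} :
      a ∈ r → SelSum rest s → SelSum (r :: rest) (a + s)

def L2pos (n : ℕ) : Set (List Sym3) :=
  {x | ∃ R R' : List (List ℕ), ValidMat n R ∧ ValidMat n R' ∧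
        (∃ s : ℕ, SelSum R s ∧ SelSum R' s) ∧
        x = encMat n R ++ Sym3.hash :: Sym3.hash :: encMat n R'}

def L2neg (n : ℕ) : Set (List Sym3) :=
  {x | ∃ R R' : List (List ℕ), ValidMat n R ∧ ValidMat n R' ∧
        (∀ s s' : ℕ, SelSum R s → SelSum R' s' → s ≠ s') ∧
        x = encMat n R ++ Sym3.hash :: Sym3.hash :: encMat n R'}

lemma L2_disj (n : ℕ) : Disjoint (L2pos n) (L2neg n) := by
  rw [Set.disjoint_left]
  rintro x ⟨R, R', hR, hR', ⟨s, hs, hs'⟩, rfl⟩ ⟨W, W', hW, hW', hne, heq⟩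
  have hlen : (encMat n R).length = (encMat n W).length := by
    rw [encMat_len R hR.2, encMat_len W hW.2, hR.1, hW.1]
  obtain ⟨h1, h2⟩ := List.append_inj heq hlen
  have h2' : encMat n R' = encMat n W' := by simpa using h2
  have e1 : R = W := encMat_inj R W hR.2 hW.2 (by rw [hR.1, hW.1]) h1
  have e2 : R' = W' := encMat_inj R' W' hR'.2 hW'.2 (by rw [hR'.1, hW'.1]) h2'
  exact hne s s (e1 ▸ hs) (e2 ▸ hs') rfl

def L2prob : PromiseFamily Sym3 := ⟨L2pos, L2neg, L2_disj⟩

def L2fam : Family := { alph := Sym3, prob := L2prob }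
/-! ## One-way probabilistic finite automata data -/

/-- Product of the matrices of the symbols of a word. -/
noncomputable def wordMatrix {α Q : Type} [Fintype Q] [DecidableEq Q]
    (Mσ : TapeSym α → Matrix Q Q ℝ) (w : List (TapeSym α)) : Matrix Q Q ℝ :=
  (w.map Mσ).prod

/-- The tape word `▷ x ◁`. -/
def tapeWord {α : Type} (x : List α) : List (TapeSym α) :=
  Sum.inr false :: (x.map Sum.inl ++ [Sum.inr true])

/-- `p_{acc}(x : q)`: the `q`-entry of the row vector `ν · M_{▷x◁}`. -/
noncomputable def pacc {α Q : Type} [Fintype Q] [DecidableEq Q]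
    (ν : Q → ℝ) (Mσ : TapeSym α → Matrix Q Q ℝ) (x : List α) (q : Q) : ℝ :=
  Matrix.vecMul ν (wordMatrix Mσ (tapeWord x)) q

/-!
The automaton guesses `σ` and `σ'` while reading. In every row it nondeterministically selects one
maximal run of `1`s (the runs are exactly the entries, since all entries are at least `1`) and adds
its length to a counter modulo `n² + 1`; in the second matrix it subtracts instead. Every choice sum
lies in `[0, n²]`, so the counter ends at `0` exactly when `sum_D(σ) = sum_D'(σ')`. This takes
`10 (n² + 1) + 1` states. For `n = 0` there are no negative instances.
-/

namespace NFA

variable {α σ : Type*} (M : NFA α σ)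

theorem evalFrom_singleton_of_step_eq {q : σ} {w : List α} (h : ∀ a ∈ w, M.step q a = {q}) :
    M.evalFrom {q} w = {q} := by
  induction w with
  | nil => rfl
  | cons a w ih =>
    rw [evalFrom_cons, stepSet_singleton, h a List.mem_cons_self]
    exact ih fun b hb => h b (List.mem_cons_of_mem a hb)

theorem evalFrom_replicate_append_singleton {q₁ q₂ : σ} {a d : α} (h₁ : M.step q₁ a = {q₂})
    (h₂ : M.step q₂ a = {q₂}) (hd : M.step q₁ d = M.step q₂ d) (m : ℕ) :
    M.evalFrom {q₁} (List.replicate m a ++ [d]) = M.step q₂ d := by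
  cases m with
  | zero => simpa using hd
  | succ m =>
    rw [List.replicate_succ, List.cons_append, evalFrom_cons, stepSet_singleton, h₁,
      evalFrom_append, evalFrom_singleton_of_step_eq M fun b hb => List.eq_of_mem_replicate hb ▸ h₂]
    simp

end NFA

namespace OneNFA

variable {α : Type}

def toNFA (M : OneNFA α) : NFA α M.Q where
  step := M.next
  start := {M.start}
  accept := M.acc

theorem exists_path_iff_mem_evalFrom (M : OneNFA α) (x : List α) (q₀ q : M.Q) :
    (∃ p : Fin (x.length + 1) → M.Q, p 0 = q₀ ∧
      (∀ i : Fin x.length, p i.succ ∈ M.next (p i.castSucc) (x.get i)) ∧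
      p (Fin.last x.length) = q) ↔ q ∈ M.toNFA.evalFrom {q₀} x := by
  induction x generalizing q₀ with
  | nil =>
    simp only [List.length_nil, NFA.evalFrom_nil, Set.mem_singleton_iff]
    exact ⟨fun ⟨p, h0, _, hq⟩ => hq ▸ h0, fun h => ⟨fun _ => q₀, rfl, nofun, h.symm⟩⟩
  | cons a x ih =>
    rw [NFA.evalFrom_cons, NFA.stepSet_singleton, NFA.mem_evalFrom_iff_exists]
    constructor
    · rintro ⟨p, h0, hstep, hq⟩
      exact ⟨p 1, h0 ▸ hstep 0, (ih _).1 ⟨fun i => p i.succ, rfl, fun i => hstep i.succ, hq⟩⟩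
    · rintro ⟨q₁, h₁, hq⟩
      obtain ⟨p, h0, hstep, hlast⟩ := (ih q₁).2 hq
      refine ⟨Fin.cons q₀ p, rfl, Fin.cases ?_ fun i => ?_, hlast⟩
      · simpa [h0] using show q₁ ∈ M.next q₀ a from h₁
      · simpa [← Fin.succ_castSucc] using hstep i

theorem accepts_iff_exists_mem_evalFrom (M : OneNFA α) (x : List α) :
    M.Accepts x ↔ ∃ q ∈ M.acc, q ∈ M.toNFA.evalFrom {M.start} x := by
  simp only [← exists_path_iff_mem_evalFrom]
  exact ⟨fun ⟨p, ⟨h0, hstep⟩, hacc⟩ => ⟨_, hacc, p, h0, hstep, rfl⟩,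
    fun ⟨_, hacc, p, h0, hstep, hq⟩ => ⟨p, ⟨h0, hstep⟩, hq ▸ hacc⟩⟩

def universal (α : Type) : OneNFA α where
  Q := Unit
  start := ()
  next _ _ := Set.univ
  next_nonempty _ _ := Set.univ_nonempty
  acc := Set.univ

theorem universal_accepts (x : List α) : (universal α).Accepts x :=
  ⟨fun _ => (), ⟨rfl, fun _ => trivial⟩, trivial⟩

end OneNFA

theorem block_eq_cons {n i : ℕ} (hi : 0 < i) :
    block n i = .one :: (List.replicate (i - 1) .one ++ List.replicate (n - i) .zero) := by
  obtain ⟨i, rfl⟩ := Nat.exists_eq_add_of_lt hi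
  rfl

theorem hash_not_mem_enc (n : ℕ) (r : List ℕ) : Sym3.hash ∉ enc n r := by
  induction r using enc.induct <;> simp_all [enc, block]

theorem selSum_nil_iff {s : ℕ} : SelSum [] s ↔ s = 0 :=
  ⟨fun h => by cases h; rfl, fun h => h ▸ .nil⟩

theorem selSum_cons_iff {r : List ℕ} {R : List (List ℕ)} {s : ℕ} :
    SelSum (r :: R) s ↔ ∃ a ∈ r, ∃ t, SelSum R t ∧ s = a + t :=
  ⟨fun h => by cases h with | cons ha ht => exact ⟨_, ha, _, ht, rfl⟩,
    fun ⟨_, ha, _, ht, hs⟩ => hs ▸ .cons ha ht⟩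

theorem SelSum.le_length_mul {R : List (List ℕ)} {s n : ℕ} (h : SelSum R s)
    (hR : ∀ r ∈ R, ∀ i ∈ r, i ≤ n) : s ≤ R.length * n := by
  induction h with
  | nil => simp
  | @cons a r R s ha _ ih =>
    have := ih fun r' hr' => hR r' (List.mem_cons_of_mem r hr')
    simp only [List.length_cons, add_mul, one_mul]
    linarith [hR r List.mem_cons_self a ha]

namespace ValidMat

variable {n : ℕ} {R : List (List ℕ)}

theorem ne_nil (h : ValidMat n R) (hn : n ≠ 0) : R ≠ [] :=
  fun hR => hn (hR ▸ h.1).symm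

theorem row_ne_nil_and_pos (h : ValidMat n R) (hn : n ≠ 0) :
    ∀ r ∈ R, r ≠ [] ∧ ∀ i ∈ r, 0 < i :=
  fun r hr => ⟨fun h' => hn (h' ▸ (h.2 r hr).1).symm, fun i hi => ((h.2 r hr).2 i hi).1⟩

theorem selSum_lt (h : ValidMat n R) {s : ℕ} (hs : SelSum R s) : s < n * n + 1 := by
  have := hs.le_length_mul fun r hr i hi => ((h.2 r hr).2 i hi).2
  rw [h.1] at this
  omega

end ValidMat

namespace SumCheck

/-- Position inside the current row: no entry selected yet (`wait`), inside a run of `1`s that was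
not selected (`skip`), inside the selected run (`count`), after it (`done`), or right after a `#`
(`sep`). -/
inductive Stage
  | wait | skip | count | done | sep
  deriving DecidableEq

instance : Fintype Stage :=
  ⟨{.wait, .skip, .count, .done, .sep}, by intro x; cases x <;> simp⟩

/-- `none` is the dead state; in `some (p, st, c)` the flag `p` says whether the second matrix is
being read and `c` is the counter. -/
abbrev State (K : ℕ) : Type := Option (Bool × Stage × ZMod K)

def sign {K : ℕ} : Bool → ZMod K
  | false => 1
  | true => -1

def step {K : ℕ} : State K → Sym3 → Set (State K)
  | some (p, .wait, c), .zero | some (p, .skip, c), .zero | some (p, .sep, c), .zero =>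
    {some (p, .wait, c)}
  | some (p, .wait, c), .one | some (p, .sep, c), .one =>
    {some (p, .count, c + sign p), some (p, .skip, c)}
  | some (p, .skip, c), .one => {some (p, .skip, c)}
  | some (p, .count, c), .zero | some (p, .done, c), .zero | some (p, .done, c), .one =>
    {some (p, .done, c)}
  | some (p, .count, c), .one => {some (p, .count, c + sign p)}
  | some (p, .count, c), .hash | some (p, .done, c), .hash => {some (p, .sep, c)}
  | some (false, .sep, c), .hash => {some (true, .sep, c)}
  | _, _ => {none}

theorem step_nonempty {K : ℕ} (q : State K) (a : Sym3) : (step q a).Nonempty := by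
  rcases q with _ | ⟨_ | _, st, c⟩ <;> (try cases st) <;> cases a <;> simp [step]

/-- The accepting states are those from which one more `#` leads to `some (true, .sep, 0)`, so that
the input can be analysed as if its last row ended in `#` like all the others
(`machine_accepts_iff`). -/
def nfa (K : ℕ) : NFA Sym3 (State K) where
  step := step
  start := {some (false, .sep, 0)}
  accept := {q | some (true, .sep, 0) ∈ step q .hash}

def machine (K : ℕ) [NeZero K] : OneNFA Sym3 where
  Q := State K
  start := some (false, .sep, 0)
  next := step
  next_nonempty := step_nonempty
  acc := (nfa K).accept

theorem sc_machine (K : ℕ) [NeZero K] : (machine K).sc = 10 * K + 1 := by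
  change Fintype.card (State K) = _
  rw [Fintype.card_option, Fintype.card_prod, Fintype.card_prod, Fintype.card_bool, ZMod.card,
    show Fintype.card Stage = 5 from rfl]
  ring

variable {K : ℕ} {p : Bool} {c : ZMod K}

theorem evalFrom_none (w : List Sym3) : (nfa K).evalFrom {none} w = {none} :=
  NFA.evalFrom_singleton_of_step_eq _ fun a _ => by cases a <;> rfl

theorem evalFrom_done {w : List Sym3} (hw : .hash ∉ w) :
    (nfa K).evalFrom {some (p, .done, c)} w = {some (p, .done, c)} :=
  NFA.evalFrom_singleton_of_step_eq _ fun a ha => by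
    cases a <;> first | rfl | exact absurd ha hw

theorem evalFrom_count_ones (k : ℕ) :
    (nfa K).evalFrom {some (p, .count, c)} (List.replicate k .one) =
      {some (p, .count, c + (k : ZMod K) * sign p)} := by
  induction k generalizing c with
  | zero => simp
  | succ k ih =>
    rw [List.replicate_succ, NFA.evalFrom_cons, NFA.stepSet_singleton]
    change (nfa K).evalFrom {some (p, .count, c + sign p)} _ = _
    rw [ih]
    push_cast
    ring_nf

theorem evalFrom_skip_ones (k : ℕ) :
    (nfa K).evalFrom {some (p, .skip, c)} (List.replicate k .one) = {some (p, .skip, c)} :=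
  NFA.evalFrom_singleton_of_step_eq _ fun _ ha => List.eq_of_mem_replicate ha ▸ rfl

theorem evalFrom_block_append {st : Stage} (hst : st = .wait ∨ st = .sep) {n i : ℕ} (hi : 0 < i)
    {d : Sym3} (hd : d ≠ .one) :
    (nfa K).evalFrom {some (p, st, c)} (block n i ++ [d]) =
      step (some (p, .done, c + (i : ZMod K) * sign p)) d ∪ step (some (p, .wait, c)) d := by
  have hpick : (nfa K).step (some (p, st, c)) .one =
      {some (p, .count, c + sign p)} ∪ {some (p, .skip, c)} := by
    rcases hst with rfl | rfl <;> rfl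
  have hcount_done (c' : ZMod K) :
      (nfa K).step (some (p, .count, c')) d = step (some (p, .done, c')) d := by
    cases d <;> first | rfl | exact absurd rfl hd
  have hskip_wait (c' : ZMod K) :
      (nfa K).step (some (p, .skip, c')) d = step (some (p, .wait, c')) d := by
    cases d <;> first | rfl | exact absurd rfl hd
  rw [block_eq_cons hi, List.cons_append, NFA.evalFrom_cons, NFA.stepSet_singleton, hpick,
    NFA.evalFrom_union, List.append_assoc]
  simp only [NFA.evalFrom_append _ _ (List.replicate (i - 1) Sym3.one)]
  rw [evalFrom_count_ones, evalFrom_skip_ones,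
    NFA.evalFrom_replicate_append_singleton _ rfl rfl (hcount_done _),
    NFA.evalFrom_replicate_append_singleton _ rfl rfl (hskip_wait _)]
  have hsum : c + sign p + ((i - 1 : ℕ) : ZMod K) * sign p = c + (i : ZMod K) * sign p := by
    push_cast [Nat.cast_sub (Nat.one_le_of_lt hi)]
    ring
  rw [hsum]
  rfl

theorem some_mem_evalFrom_append {S : Set (State K)} {u v : List Sym3}
    {q : Bool × Stage × ZMod K} :
    some q ∈ (nfa K).evalFrom S (u ++ v) ↔
      ∃ t, some t ∈ (nfa K).evalFrom S u ∧ some q ∈ (nfa K).evalFrom {some t} v := by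
  rw [NFA.evalFrom_append, NFA.mem_evalFrom_iff_exists]
  constructor
  · rintro ⟨_ | t, ht, hq⟩
    · simp [evalFrom_none] at hq
    · exact ⟨t, ht, hq⟩
  · rintro ⟨t, ht, hq⟩
    exact ⟨_, ht, hq⟩

theorem some_mem_evalFrom_enc_append_hash {st : Stage} (hst : st = .wait ∨ st = .sep) {n : ℕ}
    {r : List ℕ} (hr : r ≠ []) (hpos : ∀ i ∈ r, 0 < i) {q : Bool × Stage × ZMod K} :
    some q ∈ (nfa K).evalFrom {some (p, st, c)} (enc n r ++ [.hash]) ↔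
      ∃ a ∈ r, q = (p, .sep, c + (a : ZMod K) * sign p) := by
  induction r generalizing st c with
  | nil => exact absurd rfl hr
  | cons i t ih =>
    rcases t with _ | ⟨j, rest⟩
    · rw [show enc n [i] = block n i from rfl,
        evalFrom_block_append hst (hpos i List.mem_cons_self) (by decide)]
      simp [step]
    · rw [show enc n (i :: j :: rest) ++ [.hash] =
          (block n i ++ [.zero]) ++ (enc n (j :: rest) ++ [.hash]) by simp [enc],
        NFA.evalFrom_append, evalFrom_block_append hst (hpos i List.mem_cons_self) (by decide)]
      change some q ∈ (nfa K).evalFrom ({some (p, .done, _)} ∪ {some (p, .wait, c)}) _ ↔ _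
      rw [NFA.evalFrom_union, NFA.evalFrom_append, evalFrom_done (hash_not_mem_enc n _),
        Set.mem_union,
        ih (.inl rfl) (List.cons_ne_nil _ _) fun a ha => hpos a (List.mem_cons_of_mem i ha)]
      simp [nfa, step]

theorem some_mem_evalFrom_encMat_append_hash {n : ℕ} {r : List ℕ} {R : List (List ℕ)}
    (hR : ∀ r' ∈ r :: R, r' ≠ [] ∧ ∀ i ∈ r', 0 < i) {q : Bool × Stage × ZMod K} :
    some q ∈ (nfa K).evalFrom {some (p, .sep, c)} (encMat n (r :: R) ++ [.hash]) ↔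
      ∃ s, SelSum (r :: R) s ∧ q = (p, .sep, c + (s : ZMod K) * sign p) := by
  induction R generalizing r c with
  | nil =>
    obtain ⟨hr, hpos⟩ := hR r List.mem_cons_self
    rw [show encMat n [r] = enc n r from rfl, some_mem_evalFrom_enc_append_hash (.inr rfl) hr hpos]
    simp [selSum_cons_iff, selSum_nil_iff]
  | cons t R ih =>
    obtain ⟨hr, hpos⟩ := hR r List.mem_cons_self
    have hR' : ∀ r' ∈ t :: R, r' ≠ [] ∧ ∀ i ∈ r', 0 < i :=
      fun r' hr' => hR r' (List.mem_cons_of_mem r hr')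
    rw [show encMat n (r :: t :: R) ++ [.hash] =
        (enc n r ++ [.hash]) ++ (encMat n (t :: R) ++ [.hash]) by simp [encMat],
      some_mem_evalFrom_append]
    simp only [some_mem_evalFrom_enc_append_hash (.inr rfl) hr hpos, selSum_cons_iff (r := r)]
    constructor
    · rintro ⟨_, ⟨a, ha, rfl⟩, hq⟩
      obtain ⟨s, hs, rfl⟩ := (ih hR').1 hq
      exact ⟨a + s, ⟨a, ha, s, hs, rfl⟩, by push_cast; ring_nf⟩
    · rintro ⟨_, ⟨a, ha, s, hs, rfl⟩, rfl⟩
      refine ⟨_, ⟨a, ha, rfl⟩, (ih hR').2 ⟨s, hs, ?_⟩⟩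
      push_cast
      ring_nf

theorem machine_accepts_iff [NeZero K] {x : List Sym3} :
    (machine K).Accepts x ↔
      some (true, .sep, 0) ∈ (nfa K).evalFrom {some (false, .sep, 0)} (x ++ [.hash]) := by
  rw [OneNFA.accepts_iff_exists_mem_evalFrom, NFA.evalFrom_append, NFA.evalFrom_singleton, NFA.mem_stepSet]
  exact exists_congr fun q => and_comm

theorem machine_accepts_encMat_iff [NeZero K] {n : ℕ} {R R' : List (List ℕ)} (hR : R ≠ [])
    (hR' : R' ≠ []) (hrows : ∀ r ∈ R ++ R', r ≠ [] ∧ ∀ i ∈ r, 0 < i) :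
    (machine K).Accepts (encMat n R ++ .hash :: .hash :: encMat n R') ↔
      ∃ s s', SelSum R s ∧ SelSum R' s' ∧ (s : ZMod K) = s' := by
  obtain ⟨r, R, rfl⟩ := List.exists_cons_of_ne_nil hR
  obtain ⟨r', R', rfl⟩ := List.exists_cons_of_ne_nil hR'
  have hswitch (c : ZMod K) (w : List Sym3) :
      (nfa K).evalFrom {some (false, .sep, c)} (.hash :: w) =
        (nfa K).evalFrom {some (true, .sep, c)} w := by
    rw [NFA.evalFrom_cons, NFA.stepSet_singleton]
    rfl
  have hrows' : ∀ r ∈ r' :: R', r ≠ [] ∧ ∀ i ∈ r, 0 < i :=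
    fun r hr => hrows r (List.mem_append_right _ hr)
  rw [machine_accepts_iff,
    show encMat n (r :: R) ++ .hash :: .hash :: encMat n (r' :: R') ++ [.hash] =
      (encMat n (r :: R) ++ [.hash]) ++ .hash :: (encMat n (r' :: R') ++ [.hash]) by simp,
    some_mem_evalFrom_append]
  simp only [some_mem_evalFrom_encMat_append_hash fun r hr => hrows r (List.mem_append_left _ hr)]
  constructor
  · rintro ⟨_, ⟨s, hs, rfl⟩, h⟩
    rw [hswitch, some_mem_evalFrom_encMat_append_hash hrows'] at h
    obtain ⟨s', hs', h⟩ := h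
    simp only [sign, Prod.mk.injEq, true_and] at h
    exact ⟨s, s', hs, hs', by linear_combination -h⟩
  · rintro ⟨s, s', hs, hs', h⟩
    refine ⟨_, ⟨s, hs, rfl⟩, ?_⟩
    rw [hswitch, some_mem_evalFrom_encMat_append_hash hrows']
    exact ⟨s', hs', by simp [sign, h]⟩

theorem machine_accepts_iff_of_validMat {n : ℕ} (hn : n ≠ 0) {R R' : List (List ℕ)}
    (hR : ValidMat n R) (hR' : ValidMat n R') :
    (machine (n * n + 1)).Accepts (encMat n R ++ .hash :: .hash :: encMat n R') ↔
      ∃ s, SelSum R s ∧ SelSum R' s := by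
  rw [machine_accepts_encMat_iff (hR.ne_nil hn) (hR'.ne_nil hn) fun r hr =>
    (List.mem_append.1 hr).elim (hR.row_ne_nil_and_pos hn r) (hR'.row_ne_nil_and_pos hn r)]
  constructor
  · rintro ⟨s, s', hs, hs', h⟩
    have := congrArg ZMod.val h
    rw [ZMod.val_natCast_of_lt (hR.selSum_lt hs), ZMod.val_natCast_of_lt (hR'.selSum_lt hs')]
      at this
    exact ⟨s, hs, this ▸ hs'⟩
  · rintro ⟨s, hs, hs'⟩
    exact ⟨s, s, hs, hs', rfl⟩

end SumCheck

/-- The family `L₂` belongs to `1N`. -/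
theorem L2_mem_oneN : L2fam ∈ oneN := by
  refine ⟨fun | 0 => OneNFA.universal Sym3 | n + 1 => SumCheck.machine ((n + 1) * (n + 1) + 1),
    ⟨.C 10 * .X ^ 2 + .C 11, fun n => ?_⟩, fun n => ?_⟩
  · rcases n with _ | n
    · show 1 ≤ _
      simp
    · show (SumCheck.machine _).sc ≤ _
      rw [SumCheck.sc_machine, Polynomial.eval_add, Polynomial.eval_mul, Polynomial.eval_C,
        Polynomial.eval_pow, Polynomial.eval_X, Polynomial.eval_C]
      exact le_of_eq (by ring)
  · rcases n with _ | n
    · refine ⟨fun x _ => OneNFA.universal_accepts x, ?_⟩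
      rintro x ⟨R, R', hR, hR', hne, -⟩ -
      exact hne 0 0 (List.length_eq_zero_iff.1 hR.1 ▸ .nil)
        (List.length_eq_zero_iff.1 hR'.1 ▸ .nil) rfl
    · constructor
      · rintro x ⟨R, R', hR, hR', hs, rfl⟩
        exact (SumCheck.machine_accepts_iff_of_validMat n.succ_ne_zero hR hR').2 hs
      · rintro x ⟨R, R', hR, hR', hne, rfl⟩ hacc
        obtain ⟨s, hs, hs'⟩ :=
          (SumCheck.machine_accepts_iff_of_validMat n.succ_ne_zero hR hR').1 hacc
        exact hne s s hs hs' rfl
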